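/- Let Σ ⊆ {T, B, 4, D}. Fix h and n. For every modal formula φ ∈ L_{h,n} and every canonical formula α ∈ C_{h,n}, either ⊢_{KΣ} α→φ or ⊢_{KΣ} α→¬φ. -/

import Mathlib

namespace ModalSOA

/-- Modal formulas: propositional variables, propositional constants, ⊥, →, □. -/
inductive Formula : Type
  | var : ℕ → Formula
  | const : ℕ → Formula
  | bot : Formula
  | imp : Formula → Formula → Formula
  | box : Formula → Formula
deriving DecidableEq

namespace Formula

/-- ¬φ := φ → ⊥ -/
def neg (φ : Formula) : Formula := φ.imp bot

/-- ⊤ := ¬⊥ -/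
def top : Formula := bot.neg

/-- ◇φ := ¬□¬φ -/
def dia (φ : Formula) : Formula := φ.neg.box.neg

/-- φ ∧ ψ := ¬(φ → ¬ψ) -/
def and (φ ψ : Formula) : Formula := (φ.imp ψ.neg).neg

/-- φ ∨ ψ := ¬φ → ψ -/
def or (φ ψ : Formula) : Formula := φ.neg.imp ψ

/-- Uniform substitution: substitute formulas for propositional variables,
    leaving propositional constants fixed. -/
def subst (σ : ℕ → Formula) : Formula → Formula
  | var n => σ n
  | const n => const n
  | bot => bot
  | imp φ ψ => imp (φ.subst σ) (ψ.subst σ)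
  | box φ => box (φ.subst σ)

end Formula

open Formula

/-- The propositional variable p. -/
def pv : Formula := .var 0
/-- The propositional variable q. -/
def qv : Formula := .var 1
/-- The propositional variable r. -/
def rv : Formula := .var 2

/-- The seven extra modal axioms considered: T, B, 4, 5, D, .2, L. -/
inductive ModalAxiom : Type
  | T | B | four | five | D | dot2 | L
deriving DecidableEq

/-- The modal formula corresponding to each axiom name. -/
def ModalAxiom.fml : ModalAxiom → Formula
  | .T => pv.box.imp pv                       -- □p → p
  | .B => pv.imp pv.dia.box                   -- p → □◇p
  | .four => pv.box.imp pv.box.box            -- □p → □□p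
  | .five => pv.dia.imp pv.dia.box            -- ◇p → □◇p
  | .D => pv.box.imp pv.dia                   -- □p → ◇p
  | .dot2 => pv.box.dia.imp pv.dia.box        -- ◇□p → □◇p
  | .L => (pv.box.imp pv).box.imp pv.box      -- □(□p→p) → □p

/-- Hilbert-style provability for the normal modal logic with extra axioms `Ax`:
classical propositional axioms, K, members of `Ax`, modus ponens, necessitation,
and uniform substitution. -/
inductive Prv (Ax : Set Formula) : Formula → Prop
  | ax1 : Prv Ax (pv.imp (qv.imp pv))
  | ax2 : Prv Ax ((pv.imp (qv.imp rv)).imp ((pv.imp qv).imp (pv.imp rv)))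
  | ax3 : Prv Ax ((pv.neg.imp qv.neg).imp (qv.imp pv))
  | axK : Prv Ax ((pv.imp qv).box.imp (pv.box.imp qv.box))
  | extra {φ} : φ ∈ Ax → Prv Ax φ
  | mp {φ ψ} : Prv Ax (φ.imp ψ) → Prv Ax φ → Prv Ax ψ
  | nec {φ} : Prv Ax φ → Prv Ax φ.box
  | subst {φ} (σ : ℕ → Formula) : Prv Ax φ → Prv Ax (φ.subst σ)

/-- The axiom set of the logic KΣ. -/
def KAxioms (Sig : Set ModalAxiom) : Set Formula := ModalAxiom.fml '' Sig

/-- The axiom set of GL = K{L}. -/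
def GLAx : Set Formula := KAxioms {ModalAxiom.L}

/-- Conjunction of a list of formulas (empty conjunction is ⊤). -/
def listConj : List Formula → Formula
  | [] => top
  | [φ] => φ
  | φ :: ψ :: l => φ.and (listConj (ψ :: l))

/-- Disjunction of a list of formulas (empty disjunction is ⊥). -/
def listDisj : List Formula → Formula
  | [] => bot
  | [φ] => φ
  | φ :: ψ :: l => φ.or (listDisj (ψ :: l))

/-- Pbl(Γ, φ): there are ψ₁,…,ψₙ ∈ Γ with ⊢ (ψ₁∧…∧ψₙ) → φ. -/
def Pbl (Ax : Set Formula) (Γ : Set Formula) (φ : Formula) : Prop :=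
  ∃ l : List Formula, (∀ ψ ∈ l, ψ ∈ Γ) ∧ Prv Ax ((listConj l).imp φ)

/-- A formula φ is consistent if ⊬ φ → ⊥. -/
def FmlConsistent (Ax : Set Formula) (φ : Formula) : Prop := ¬ Prv Ax (φ.imp bot)

/-- A set Γ is consistent if ¬Pbl(Γ, ⊥). -/
def SetConsistent (Ax : Set Formula) (Γ : Set Formula) : Prop := ¬ Pbl Ax Γ bot

/-- Γ is maximally consistent: consistent, closed under deduction, and for
every φ, φ ∈ Γ or ¬φ ∈ Γ. -/
def MaxConsistent (Ax : Set Formula) (Γ : Set Formula) : Prop :=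
  SetConsistent Ax Γ ∧ (∀ φ, Pbl Ax Γ φ → φ ∈ Γ) ∧ (∀ φ, φ ∈ Γ ∨ φ.neg ∈ Γ)

/-- Euclidean relation. -/
def Euclidean {W : Type*} (R : W → W → Prop) : Prop := ∀ ⦃x y z⦄, R x y → R x z → R y z

/-- Serial relation. -/
def Serial {W : Type*} (R : W → W → Prop) : Prop := ∀ x, ∃ y, R x y

/-- Directed relation. -/
def Directed {W : Type*} (R : W → W → Prop) : Prop :=
  ∀ ⦃x y z⦄, R x y → R x z → ∃ s, R y s ∧ R z s

/-- No infinite ascending R-sequence. -/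
def NoInfiniteAscent {W : Type*} (R : W → W → Prop) : Prop :=
  ¬ ∃ f : ℕ → W, ∀ n, R (f n) (f (n + 1))

/-- A frame (with relation R) is appropriate to a given modal axiom. -/
def AppropriateTo {W : Type*} (R : W → W → Prop) : ModalAxiom → Prop
  | .T => Reflexive R
  | .B => Symmetric R
  | .four => Transitive R
  | .five => Euclidean R
  | .D => Serial R
  | .dot2 => Directed R
  | .L => Transitive R ∧ NoInfiniteAscent R

/-- A frame is appropriate to Σ if it is appropriate to each member of Σ. -/
def Appropriate {W : Type*} (R : W → W → Prop) (Sig : Set ModalAxiom) : Prop :=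
  ∀ a ∈ Sig, AppropriateTo R a

/-- A valuation on a frame: truth values for all formulas, respecting the
Kripke clauses for ⊥, →, □. -/
structure Valuation {W : Type*} (R : W → W → Prop) where
  val : W → Formula → Bool
  val_bot : ∀ w, val w Formula.bot = false
  val_imp : ∀ w φ ψ, val w (φ.imp ψ) = (!(val w φ) || val w ψ)
  val_box : ∀ w φ, val w φ.box = true ↔ ∀ v, R w v → val v φ = true

/-- F ⊩ φ : every valuation on the frame makes φ true at every world. -/
def FrameForces {W : Type*} (R : W → W → Prop) (φ : Formula) : Prop :=
  ∀ V : Valuation R, ∀ w : W, V.val w φ = true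

/-- Height of a formula. -/
def ht : Formula → ℕ
  | .imp φ ψ => max (ht φ) (ht ψ)
  | .box φ => 1 + ht φ
  | _ => 0

/-- Order of a formula, with respect to the fixed enumeration `atom` of
atomic formulas. -/
def ord : Formula → ℕ
  | .bot => 0
  | .var k => 2 * k + 1
  | .const k => 2 * k + 2
  | .imp φ ψ => max (ord φ) (ord ψ)
  | .box φ => ord φ

/-- A fixed enumeration p₀, p₁, … of the atomic formulas (⊥, variables and
constants), with `ord (atom n) = n`. -/
def atom : ℕ → Formula
  | 0 => .bot
  | n + 1 => if n % 2 = 0 then .var (n / 2) else .const (n / 2)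

/-- φ ∈ L_{h,n}. -/
def InL (h n : ℕ) (φ : Formula) : Prop := ht φ ≤ h ∧ ord φ ≤ n

/-- T̂ for T ⊆ {p₀,…,pₙ}: the conjunction of the atoms in T and the negations
of the remaining atoms among p₀,…,pₙ. -/
def hatT (n : ℕ) (T : List ℕ) : Formula :=
  listConj ((List.range (n + 1)).map (fun i => if i ∈ T then atom i else (atom i).neg))

/-- The canonical formula α_{S,T} = (∧_{ψ∈S} ◇ψ) ∧ □(∨S) ∧ T̂. -/
def canonAlpha (n : ℕ) (S : List Formula) (T : List ℕ) : Formula :=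
  (listConj (S.map dia)).and (((listDisj S).box).and (hatT n T))

/-- The canonical formulas C_{h,n} (as a finite list). -/
def C : ℕ → ℕ → List Formula
  | 0, n => (List.range (n + 1)).sublists.map (hatT n)
  | h + 1, n => (C h n).sublists.flatMap
      (fun S => (List.range (n + 1)).sublists.map (fun T => canonAlpha n S T))

/-- ⊕X := ∨_{α∈X}(α ∧ ∧_{β∈X\{α}} ¬β). -/
def bigOplus (X : List Formula) : Formula :=
  listDisj (X.map (fun α => α.and (listConj ((X.filter (· ≠ α)).map neg))))

/-- The set of subformulas of a formula. -/
def sub : Formula → Finset Formula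
  | .imp φ ψ => insert (Formula.imp φ ψ) (sub φ ∪ sub ψ)
  | .box φ => insert φ.box (sub φ)
  | a => {a}

/-- (W, R, V) is a weak Kripke model of φ: W nonempty and V satisfies the
valuation clauses for ⊥, →, □ on the subformulas of φ. -/
structure IsWeakKripkeModel (φ : Formula) {W : Type*} (R : W → W → Prop)
    (V : W → Formula → Bool) : Prop where
  nonempty : Nonempty W
  val_bot : ∀ w, Formula.bot ∈ sub φ → V w Formula.bot = false
  val_imp : ∀ w ψ θ, ψ.imp θ ∈ sub φ → V w (ψ.imp θ) = (!(V w ψ) || V w θ)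
  val_box : ∀ w ψ, ψ.box ∈ sub φ → (V w ψ.box = true ↔ ∀ v, R w v → V v ψ = true)

/-- W̃ : the KΣ-consistent α ∈ C_{h+1,n} with ⊢ α → φ. -/
def tildeW (Ax : Set Formula) (φ : Formula) (h n : ℕ) : Set Formula :=
  {α | α ∈ C (h + 1) n ∧ FmlConsistent Ax α ∧ Prv Ax (α.imp φ)}

/-- α →c β iff α ∧ ◇β is consistent. -/
def relC (Ax : Set Formula) (α β : Formula) : Prop := FmlConsistent Ax (α.and β.dia)

/-- Ṽ(α, ψ) = 1 iff ⊢ α → ψ. -/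
noncomputable def tildeV (Ax : Set Formula) (α ψ : Formula) : Bool :=
  @decide _ (Classical.propDecidable (Prv Ax (α.imp ψ)))

-- α′ : the unique consistent member of C_{h,n} provably implied by α.
open Classical in
noncomputable def prime (Ax : Set Formula) (h n : ℕ) (α : Formula) : Formula :=
  if hx : ∃ α', α' ∈ C h n ∧ FmlConsistent Ax α' ∧ Prv Ax (α.imp α') then hx.choose
  else Formula.bot

/-- α →m β iff ⊢ α → ◇β′ and every ξ ∈ C_{h,n} with ⊢ β → ◇ξ satisfies ⊢ α → ◇ξ. -/
def relM (Ax : Set Formula) (h n : ℕ) (α β : Formula) : Prop :=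
  Prv Ax (α.imp (prime Ax h n β).dia) ∧
  ∀ ξ ∈ C h n, Prv Ax (β.imp ξ.dia) → Prv Ax (α.imp ξ.dia)

/-- α →d β (for GL) iff α →m β and some γ ∈ C_{h,n} has ⊢ α → ◇γ and ⊢ β → □¬γ. -/
def relD (h n : ℕ) (α β : Formula) : Prop :=
  relM GLAx h n α β ∧
  ∃ γ ∈ C h n, Prv GLAx (α.imp γ.dia) ∧ Prv GLAx (β.imp γ.neg.box)

/-! By induction on `φ`, for all `h` at once. An atom of order `≤ n` is decided by the conjunct `T̂`
of `α`, and implications are decided by propositional logic. For `□ψ` with `α = α_{S,T}`, each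
`β ∈ S ⊆ C_{h-1,n}` decides `ψ`: if every `β` proves `ψ`, then `□(∨S)` yields `□ψ`; if some `β`
refutes `ψ`, then `◇β` yields `¬□ψ`. -/

section Hilbert

variable {Ax : Set Formula}

namespace Prv

theorem imp_intro (φ ψ : Formula) : Prv Ax (φ.imp (ψ.imp φ)) := by
  simpa [pv, qv, Formula.subst] using
    (ax1 : Prv Ax _).subst (fun k => if k = 0 then φ else ψ)

theorem imp_distrib (φ ψ χ : Formula) :
    Prv Ax ((φ.imp (ψ.imp χ)).imp ((φ.imp ψ).imp (φ.imp χ))) := by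
  simpa [pv, qv, rv, Formula.subst] using
    (ax2 : Prv Ax _).subst (fun k => if k = 0 then φ else if k = 1 then ψ else χ)

theorem neg_imp_neg (φ ψ : Formula) : Prv Ax ((φ.neg.imp ψ.neg).imp (ψ.imp φ)) := by
  simpa [pv, qv, Formula.subst, Formula.neg] using
    (ax3 : Prv Ax _).subst (fun k => if k = 0 then φ else ψ)

theorem box_imp_distrib (φ ψ : Formula) : Prv Ax ((φ.imp ψ).box.imp (φ.box.imp ψ.box)) := by
  simpa [pv, qv, Formula.subst] using
    (axK : Prv Ax _).subst (fun k => if k = 0 then φ else ψ)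

theorem imp_self (φ : Formula) : Prv Ax (φ.imp φ) :=
  ((imp_distrib φ (φ.imp φ) φ).mp (imp_intro φ (φ.imp φ))).mp (imp_intro φ φ)

end Prv

/-- Derivability from a list of hypotheses, by modus ponens only. -/
inductive Der (Ax : Set Formula) : List Formula → Formula → Prop
  | hyp {Γ φ} : φ ∈ Γ → Der Ax Γ φ
  | thm {Γ φ} : Prv Ax φ → Der Ax Γ φ
  | mp {Γ φ ψ} : Der Ax Γ (φ.imp ψ) → Der Ax Γ φ → Der Ax Γ ψ

namespace Der

theorem deduction {Γ : List Formula} {ψ φ : Formula} (h : Der Ax (ψ :: Γ) φ) :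
    Der Ax Γ (ψ.imp φ) := by
  generalize hΔ : ψ :: Γ = Δ at h
  induction h with
  | hyp hφ =>
    subst hΔ
    rcases List.mem_cons.1 hφ with rfl | hφ
    · exact thm (Prv.imp_self _)
    · exact (thm (Prv.imp_intro _ _)).mp (hyp hφ)
  | thm hφ => exact (thm (Prv.imp_intro _ _)).mp (thm hφ)
  | mp _ _ ih₁ ih₂ => exact ((thm (Prv.imp_distrib _ _ _)).mp ih₁).mp ih₂

theorem toPrv {φ : Formula} (h : Der Ax [] φ) : Prv Ax φ := by
  induction h with
  | hyp h => simp at h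
  | thm h => exact h
  | mp _ _ ih₁ ih₂ => exact ih₁.mp ih₂

end Der

namespace Prv

theorem imp_trans {φ ψ χ : Formula} (h₁ : Prv Ax (φ.imp ψ)) (h₂ : Prv Ax (ψ.imp χ)) :
    Prv Ax (φ.imp χ) :=
  Der.toPrv <| .deduction <| (Der.thm h₂).mp ((Der.thm h₁).mp (.hyp (by simp)))

theorem imp_mp {α φ ψ : Formula} (h₁ : Prv Ax (α.imp (φ.imp ψ))) (h₂ : Prv Ax (α.imp φ)) :
    Prv Ax (α.imp ψ) :=
  ((imp_distrib α φ ψ).mp h₁).mp h₂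

theorem imp_swap {φ ψ χ : Formula} (h : Prv Ax (φ.imp (ψ.imp χ))) : Prv Ax (ψ.imp (φ.imp χ)) :=
  Der.toPrv <| .deduction <| .deduction <|
    ((Der.thm h).mp (.hyp (φ := φ) (by simp))).mp (.hyp (φ := ψ) (by simp))

theorem bot_imp (φ : Formula) : Prv Ax (bot.imp φ) :=
  (neg_imp_neg φ bot).mp ((imp_intro _ _).mp (imp_self bot))

theorem neg_imp (φ ψ : Formula) : Prv Ax (φ.neg.imp (φ.imp ψ)) :=
  Der.toPrv <| .deduction <| .deduction <|
    (Der.thm (bot_imp ψ)).mp ((Der.hyp (φ := φ.neg) (by simp)).mp (.hyp (φ := φ) (by simp)))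

theorem neg_neg_imp (φ : Formula) : Prv Ax (φ.neg.neg.imp φ) :=
  (neg_imp_neg φ φ.neg.neg).mp (imp_swap (imp_self φ.neg.neg))

theorem imp_neg_of_imp {φ ψ : Formula} (h : Prv Ax (φ.imp ψ)) : Prv Ax (ψ.neg.imp φ.neg) :=
  Der.toPrv <| .deduction <| .deduction <|
    (Der.hyp (φ := ψ.neg) (by simp)).mp ((Der.thm h).mp (.hyp (φ := φ) (by simp)))

theorem imp_neg_imp (φ ψ : Formula) : Prv Ax (φ.imp (ψ.neg.imp (φ.imp ψ).neg)) :=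
  Der.toPrv <| .deduction <| .deduction <| .deduction <|
    (Der.hyp (φ := ψ.neg) (by simp)).mp
      ((Der.hyp (φ := φ.imp ψ) (by simp)).mp (.hyp (φ := φ) (by simp)))

theorem and_left (φ ψ : Formula) : Prv Ax ((φ.and ψ).imp φ) :=
  imp_trans (imp_neg_of_imp (neg_imp φ ψ.neg)) (neg_neg_imp φ)

theorem and_right (φ ψ : Formula) : Prv Ax ((φ.and ψ).imp ψ) :=
  imp_trans (imp_neg_of_imp (imp_intro ψ.neg φ)) (neg_neg_imp ψ)

theorem or_elim {φ ψ χ : Formula} (h₁ : Prv Ax (φ.imp χ)) (h₂ : Prv Ax (ψ.imp χ)) :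
    Prv Ax ((φ.or ψ).imp χ) :=
  Der.toPrv <| .deduction <| (Der.thm (neg_neg_imp χ)).mp <| .deduction <|
    (Der.hyp (φ := χ.neg) (by simp)).mp <| (Der.thm h₂).mp <|
      (Der.hyp (φ := φ.or ψ) (by simp)).mp <|
        (Der.thm (imp_neg_of_imp h₁)).mp (.hyp (φ := χ.neg) (by simp))

theorem box_mono {φ ψ : Formula} (h : Prv Ax (φ.imp ψ)) : Prv Ax (φ.box.imp ψ.box) :=
  (box_imp_distrib φ ψ).mp h.nec

theorem listConj_imp {l : List Formula} {ψ : Formula} (h : ψ ∈ l) :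
    Prv Ax ((listConj l).imp ψ) := by
  match l, h with
  | [_], h =>
    rcases List.mem_singleton.1 h with rfl
    exact imp_self ψ
  | φ :: χ :: l, h =>
    rcases List.mem_cons.1 h with rfl | h
    · exact and_left _ _
    · exact imp_trans (and_right φ _) (listConj_imp h)

theorem listDisj_imp {l : List Formula} {χ : Formula} (h : ∀ ψ ∈ l, Prv Ax (ψ.imp χ)) :
    Prv Ax ((listDisj l).imp χ) := by
  match l with
  | [] => exact bot_imp χ
  | [φ] => exact h φ (by simp)
  | φ :: ψ :: l =>
    exact or_elim (h φ (by simp)) (listDisj_imp fun θ hθ => h θ (List.mem_cons_of_mem _ hθ))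

end Prv

end Hilbert

theorem atom_two_mul_add_one (k : ℕ) : atom (2 * k + 1) = .var k := by
  simp [atom]

theorem atom_two_mul_add_two (k : ℕ) : atom (2 * k + 2) = .const k := by
  simp only [atom, show (2 * k + 1) % 2 = 1 by omega, show (2 * k + 1) / 2 = k by omega]
  rfl

theorem exists_eq_hatT_of_mem_C_zero {n : ℕ} {α : Formula} (hα : α ∈ C 0 n) :
    ∃ T, α = hatT n T := by
  obtain ⟨T, -, rfl⟩ := List.mem_map.1 hα
  exact ⟨T, rfl⟩

theorem exists_eq_canonAlpha_of_mem_C_succ {h n : ℕ} {α : Formula} (hα : α ∈ C (h + 1) n) :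
    ∃ S T, (∀ β ∈ S, β ∈ C h n) ∧ α = canonAlpha n S T := by
  simp only [C, List.mem_flatMap, List.mem_map, List.mem_sublists] at hα
  obtain ⟨S, hS, T, -, rfl⟩ := hα
  exact ⟨S, T, fun β hβ => hS.mem hβ, rfl⟩

section Canonical

variable {Ax : Set Formula} {n : ℕ} {S : List Formula} {T : List ℕ}

theorem canonAlpha_imp_dia {β : Formula} (hβ : β ∈ S) :
    Prv Ax ((canonAlpha n S T).imp β.dia) :=
  Prv.imp_trans (Prv.and_left _ _) (Prv.listConj_imp (List.mem_map_of_mem hβ))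

theorem canonAlpha_imp_box_listDisj : Prv Ax ((canonAlpha n S T).imp (listDisj S).box) :=
  Prv.imp_trans (Prv.and_right _ _) (Prv.and_left _ _)

theorem canonAlpha_imp_hatT : Prv Ax ((canonAlpha n S T).imp (hatT n T)) :=
  Prv.imp_trans (Prv.and_right _ _) (Prv.and_right _ _)

end Canonical

def Decides (Ax : Set Formula) (α φ : Formula) : Prop :=
  Prv Ax (α.imp φ) ∨ Prv Ax (α.imp φ.neg)

namespace Decides

variable {Ax : Set Formula} {α φ ψ : Formula}

theorem of_imp {β : Formula} (hαβ : Prv Ax (α.imp β)) (h : Decides Ax β φ) : Decides Ax α φ :=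
  h.imp (Prv.imp_trans hαβ) (Prv.imp_trans hαβ)

theorem bot (α : Formula) : Decides Ax α .bot :=
  Or.inr ((Prv.imp_intro _ _).mp (Prv.imp_self .bot))

theorem imp (hφ : Decides Ax α φ) (hψ : Decides Ax α ψ) : Decides Ax α (φ.imp ψ) := by
  rcases hψ with hψ | hψ
  · exact Or.inl (Prv.imp_trans hψ (Prv.imp_intro ψ φ))
  rcases hφ with hφ | hφ
  · exact Or.inr (Prv.imp_mp (Prv.imp_trans hφ (Prv.imp_neg_imp φ ψ)) hψ)
  · exact Or.inl (Prv.imp_trans hφ (Prv.neg_imp φ ψ))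

theorem canonAlpha_box {n : ℕ} {S : List Formula} {T : List ℕ}
    (hS : ∀ β ∈ S, Decides Ax β ψ) : Decides Ax (canonAlpha n S T) ψ.box := by
  by_cases hall : ∀ β ∈ S, Prv Ax (β.imp ψ)
  · exact Or.inl <| Prv.imp_trans canonAlpha_imp_box_listDisj <|
      Prv.box_mono (Prv.listDisj_imp hall)
  · push Not at hall
    obtain ⟨β, hβS, hβψ⟩ := hall
    have hψβ : Prv Ax (ψ.imp β.neg) := Prv.imp_swap ((hS β hβS).resolve_left hβψ)
    -- `◇β → ¬□ψ` is literally the contrapositive of `□ψ → □¬β`.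
    exact Or.inr <| Prv.imp_trans (canonAlpha_imp_dia hβS) (Prv.imp_neg_of_imp (Prv.box_mono hψβ))

theorem hatT_atom {n i : ℕ} (T : List ℕ) (hi : i ≤ n) : Decides Ax (hatT n T) (atom i) := by
  have hmem : (if i ∈ T then atom i else (atom i).neg) ∈
      (List.range (n + 1)).map (fun i => if i ∈ T then atom i else (atom i).neg) :=
    List.mem_map_of_mem (List.mem_range.2 (Nat.lt_succ_of_le hi))
  have hconj := Prv.listConj_imp (Ax := Ax) hmem
  by_cases hiT : i ∈ T
  · rw [if_pos hiT] at hconj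
    exact Or.inl hconj
  · rw [if_neg hiT] at hconj
    exact Or.inr hconj

theorem atom_of_mem_C {h n i : ℕ} (hα : α ∈ C h n) (hi : i ≤ n) : Decides Ax α (atom i) := by
  cases h with
  | zero =>
    obtain ⟨T, rfl⟩ := exists_eq_hatT_of_mem_C_zero hα
    exact hatT_atom T hi
  | succ h =>
    obtain ⟨S, T, -, rfl⟩ := exists_eq_canonAlpha_of_mem_C_succ hα
    exact of_imp canonAlpha_imp_hatT (hatT_atom T hi)

theorem of_mem_C {h n : ℕ} (hα : α ∈ C h n) (hφ : InL h n φ) : Decides Ax α φ := by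
  induction φ generalizing h α with
  | var k =>
    rw [← atom_two_mul_add_one]
    exact atom_of_mem_C hα hφ.2
  | const k =>
    rw [← atom_two_mul_add_two]
    exact atom_of_mem_C hα hφ.2
  | bot => exact bot α
  | imp φ ψ ihφ ihψ =>
    exact imp (ihφ hα ⟨le_of_max_le_left hφ.1, le_of_max_le_left hφ.2⟩)
      (ihψ hα ⟨le_of_max_le_right hφ.1, le_of_max_le_right hφ.2⟩)
  | box ψ ih =>
    obtain ⟨hht, hord⟩ := hφ
    simp only [ht] at hht
    obtain ⟨h, rfl⟩ : ∃ h', h = h' + 1 := ⟨h - 1, by omega⟩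
    obtain ⟨S, T, hS, rfl⟩ := exists_eq_canonAlpha_of_mem_C_succ hα
    exact canonAlpha_box fun β hβ => ih (hS β hβ) ⟨by omega, hord⟩

end Decides

theorem canonical_decides_general (Sig : Set ModalAxiom)
    (h n : ℕ) (φ : Formula) (hφ : InL h n φ) (α : Formula) (hα : α ∈ C h n) :
    Prv (KAxioms Sig) (α.imp φ) ∨ Prv (KAxioms Sig) (α.imp φ.neg) :=
  Decides.of_mem_C hα hφ

/-- For Σ ⊆ {T,B,4,D}, φ ∈ L_{h,n} and α ∈ C_{h,n}, either
⊢ α→φ or ⊢ α→¬φ. -/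
theorem canonical_decides (Sig : Set ModalAxiom)
    (hSig : Sig ⊆ {ModalAxiom.T, ModalAxiom.B, ModalAxiom.four, ModalAxiom.D})
    (h n : ℕ) (φ : Formula) (hφ : InL h n φ) (α : Formula) (hα : α ∈ C h n) :
    Prv (KAxioms Sig) (α.imp φ) ∨ Prv (KAxioms Sig) (α.imp φ.neg) :=
  canonical_decides_general Sig h n φ hφ α hα

end ModalSOA
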